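/- For an exterior algebra E = Λ(V) over a field 𝕜 and elements e_{i₁}, …, e_{i_k} of a basis of V, the derivation ∂ with ∂(eᵢ) = 1 satisfies ∂(e_{i₁}e_{i₂}⋯e_{i_k}) = (e_{i₁}−e_{i_k})(e_{i₂}−e_{i_k})⋯(e_{i_{k−1}}−e_{i_k}). -/

import Mathlib

/-!
Since `e_a ∧ e_a = 0`, and more generally `e_a x e_a = 0` for every `x`, the product
`e_{i₁} ⋯ e_{i_{k-1}} e_a` does not change when each `e_{i_j}` is replaced by `e_{i_j} - e_a`.
Each of these differences is killed by `∂`, so `∂` annihilates their product, and the Leibniz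
rule applied to the last factor gives `∂(y e_a) = ∂(e_a) y = y` for `y = ∏ (e_{i_j} - e_a)`.
-/

open ExteriorAlgebra

/-- The exterior algebra `E = Λ(𝕜^α)`. -/
abbrev Ex (𝕜 : Type) [Field 𝕜] (α : Type) := ExteriorAlgebra 𝕜 (α → 𝕜)

/-- The distinguished degree-one generators `e_i` of the exterior algebra. -/
noncomputable def gen (𝕜 : Type) [Field 𝕜] {α : Type} [DecidableEq α] (i : α) : Ex 𝕜 α :=
  ι 𝕜 (Pi.single i (1 : 𝕜))

/-- The derivation `∂` on the exterior algebra with `∂ e_i = 1` for all `i`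
(contraction against the linear functional `v ↦ Σᵢ vᵢ`). -/
noncomputable def osd (𝕜 : Type) [Field 𝕜] {α : Type} [Fintype α] :
    Ex 𝕜 α →ₗ[𝕜] Ex 𝕜 α :=
  (CliffordAlgebra.contractRight (Q := (0 : QuadraticForm 𝕜 (α → 𝕜)))).flip
    (∑ i, LinearMap.proj i)

namespace CliffordAlgebra

variable {R : Type*} [CommRing R] {M : Type*} [AddCommGroup M] [Module R M]

theorem contractRight_prod_map_ι_eq_zero {Q : QuadraticForm R M} (d : Module.Dual R M)
    (L : List M) (hL : ∀ u ∈ L, d u = 0) : contractRight (L.map (ι Q)).prod d = 0 := by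
  induction L using List.reverseRecOn with
  | nil => exact contractRight_one Q d
  | append_singleton L u ih =>
    rw [List.map_append, List.prod_append, List.map_singleton, List.prod_singleton,
      contractRight_mul_ι, hL u (by simp), ih fun v hv => hL v (by simp [hv])]
    simp

end CliffordAlgebra

namespace ExteriorAlgebra

variable {R : Type*} [CommRing R] {M : Type*} [AddCommGroup M] [Module R M]

open CliffordAlgebra in
theorem ι_mul_eq_involute_mul (w : M) (x : ExteriorAlgebra R M) :
    ι R w * x = involute x * ι R w := by
  induction x using ExteriorAlgebra.induction with
  | algebraMap r => simp [Algebra.commutes]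
  | ι m => rw [involute_ι, neg_mul, eq_neg_iff_add_eq_zero, ι_add_mul_swap]
  | mul a b ha hb => rw [map_mul, mul_assoc, ← hb, ← mul_assoc, ha, mul_assoc]
  | add a b ha hb => rw [mul_add, ha, hb, map_add, add_mul]

theorem ι_mul_mul_ι_self (w : M) (x : ExteriorAlgebra R M) : ι R w * x * ι R w = 0 := by
  rw [ι_mul_eq_involute_mul, mul_assoc, ι_sq_zero, mul_zero]

theorem prod_map_ι_mul_ι_eq_prod_map_ι_sub (L : List M) (w : M) :
    (L.map (ι R)).prod * ι R w = (L.map fun u => ι R (u - w)).prod * ι R w := by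
  induction L with
  | nil => rfl
  | cons u L ih =>
    simp only [List.map_cons, List.prod_cons, mul_assoc, ih, map_sub]
    rw [sub_mul, ← mul_assoc (ι R w), ι_mul_mul_ι_self, sub_zero]

open CliffordAlgebra in
theorem contractRight_prod_map_ι_mul_ι (d : Module.Dual R M) (L : List M) (w : M)
    (hL : ∀ u ∈ L, d u = d w) :
    contractRight ((L.map (ι R)).prod * ι R w) d = d w • (L.map fun u => ι R (u - w)).prod := by
  have hker : contractRight (L.map fun u => ι R (u - w)).prod d = 0 := by
    rw [show (L.map fun u => ι R (u - w)) = (L.map (· - w)).map (ι R) by simp]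
    exact contractRight_prod_map_ι_eq_zero d _ (by simpa [sub_eq_zero])
  rw [prod_map_ι_mul_ι_eq_prod_map_ι_sub, contractRight_mul_ι, hker, zero_mul, sub_zero]

end ExteriorAlgebra

theorem osd_prod_formula_general (𝕜 : Type) [Field 𝕜] {α : Type} [Fintype α] [DecidableEq α]
    (l : List α) (a : α) :
    osd 𝕜 (((l ++ [a]).map (gen 𝕜)).prod) =
      (l.map (fun i => gen 𝕜 i - gen 𝕜 a)).prod := by
  have hsum : ∀ i, (∑ j, LinearMap.proj j : Module.Dual 𝕜 (α → 𝕜)) (Pi.single i 1) = 1 := by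
    simp [Finset.sum_pi_single']
  have hsplit : ((l ++ [a]).map (gen 𝕜)).prod =
      ((l.map fun i => Pi.single i (1 : 𝕜)).map (ι 𝕜)).prod * ι 𝕜 (Pi.single a 1) := by
    simp only [List.map_append, List.prod_append, List.map_map, List.map_singleton,
      List.prod_singleton]
    rfl
  rw [hsplit]
  refine (contractRight_prod_map_ι_mul_ι _ _ _ (by simp [hsum])).trans ?_
  simp [hsum, gen, Function.comp_def]

/-- For distinct basis elements `e_{i₁}, …, e_{i_k}`, the derivation `∂` with `∂ eᵢ = 1`
satisfies `∂(e_{i₁} ⋯ e_{i_k}) = (e_{i₁} − e_{i_k})(e_{i₂} − e_{i_k}) ⋯ (e_{i_{k−1}} − e_{i_k})`. -/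
theorem osd_prod_formula (𝕜 : Type) [Field 𝕜] {α : Type} [Fintype α] [DecidableEq α]
    (l : List α) (a : α) (hnd : (l ++ [a]).Nodup) :
    osd 𝕜 (((l ++ [a]).map (gen 𝕜)).prod) =
      (l.map (fun i => gen 𝕜 i - gen 𝕜 a)).prod :=
  osd_prod_formula_general 𝕜 l a
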